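/- Let d be a natural number, let g, θ : Fin d → ℝ be the gradient and current parameter vector, let η > 0 be a learning rate, and let r ≤ d. With the gradient-descent update Δ i = −η · g i, the importance score S i = −g i · Δ i − g i · θ i equals η · (g i)² − g i · θ i, and the indicator x̃ of any subset T of cardinality r satisfying S j ≤ S i for all i ∈ T, j ∉ T minimizes ΔL(x) = ∑_{i=1}^{d} g i · (x i · (−η · g i) + (1 − x i) · (−θ i)) over all binary x : Fin d → {0,1} with ∑_i x i = r. -/

import Mathlib

/-!
Substituting `Δ i = -η * g i` makes `ΔL(x) = -∑ g i * θ i - ∑ x i * S i`, so minimizing `ΔL` over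
binary `x` with `r` ones is maximizing the sum of `S` over an `r`-element set. An `r`-set `T`
dominating its complement wins: against any other `r`-set `U`, the common part cancels, and
`U \ T`, `T \ U` have the same size with every score on the former below every score on the latter.
-/

open Finset

theorem Finset.sum_le_sum_of_card_eq_of_forall_le {ι M : Type*} [AddCommMonoid M] [LinearOrder M]
    [IsOrderedAddMonoid M] {s t : Finset ι} {f : ι → M} (hcard : #s = #t)
    (htop : ∀ i ∈ t, ∀ j ∉ t, f j ≤ f i) : ∑ i ∈ s, f i ≤ ∑ i ∈ t, f i := by
  classical
  have hsdiff : #(s \ t) = #(t \ s) := card_sdiff_comm hcard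
  have hsdiff_sum_le : ∑ i ∈ s \ t, f i ≤ ∑ i ∈ t \ s, f i := by
    rcases (t \ s).eq_empty_or_nonempty with hempty | hne
    · rw [hempty, card_empty, card_eq_zero] at hsdiff
      rw [hsdiff, hempty]
    · obtain ⟨i₀, hi₀, hmin⟩ := exists_min_image (t \ s) f hne
      calc ∑ i ∈ s \ t, f i ≤ #(s \ t) • f i₀ :=
            sum_le_card_nsmul _ _ _ fun j hj ↦ htop i₀ (mem_sdiff.1 hi₀).1 j (mem_sdiff.1 hj).2
        _ = #(t \ s) • f i₀ := by rw [hsdiff]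
        _ ≤ ∑ i ∈ t \ s, f i := card_nsmul_le_sum _ _ _ hmin
  rw [← sum_inter_add_sum_sdiff s t, ← sum_inter_add_sum_sdiff t s, inter_comm]
  gcongr

theorem Fintype.exists_finset_eq_ite_mem_of_binary {ι R : Type*} [Fintype ι] [DecidableEq ι]
    [Zero R] [One R] {x : ι → R} (hx : ∀ i, x i = 0 ∨ x i = 1) :
    ∃ U : Finset ι, ∀ i, x i = if i ∈ U then 1 else 0 := by
  classical
  refine ⟨univ.filter (x · = 1), fun i ↦ ?_⟩
  rcases hx i with h | h <;> simp [h]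

theorem sum_mul_gd_step_add_prune_eq {ι : Type*} [Fintype ι] (g θ x : ι → ℝ) (η : ℝ) :
    ∑ i, g i * (x i * (-η * g i) + (1 - x i) * (-θ i)) =
      -∑ i, g i * θ i - ∑ i, x i * (η * g i ^ 2 - g i * θ i) := by
  rw [← sum_neg_distrib, ← sum_sub_distrib]
  exact sum_congr rfl fun i _ ↦ by ring

theorem pruning_gd_topr_general {d : ℕ} (g θ : Fin d → ℝ) (η : ℝ)
    (r : ℕ)
    (S : Fin d → ℝ) (hS : ∀ i, S i = -(g i) * (-η * g i) - g i * θ i)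
    (T : Finset (Fin d)) (hT : T.card = r)
    (htop : ∀ i ∈ T, ∀ j ∉ T, S j ≤ S i)
    (xt : Fin d → ℝ) (hxt : ∀ i, xt i = if i ∈ T then 1 else 0) :
    (∀ i, S i = η * (g i) ^ 2 - g i * θ i) ∧
      ∀ x : Fin d → ℝ, (∀ i, x i = 0 ∨ x i = 1) → (∑ i, x i) = (r : ℝ) →
        ∑ i, g i * (xt i * (-η * g i) + (1 - xt i) * (-θ i)) ≤
          ∑ i, g i * (x i * (-η * g i) + (1 - x i) * (-θ i)) := by
  have hS' : ∀ i, S i = η * g i ^ 2 - g i * θ i := fun i ↦ by rw [hS]; ring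
  refine ⟨hS', fun x hx hsum ↦ ?_⟩
  obtain ⟨U, hxU⟩ := Fintype.exists_finset_eq_ite_mem_of_binary hx
  have hU : #U = #T := by
    simp only [hxU, sum_boole, filter_mem_eq_inter, univ_inter] at hsum
    exact_mod_cast hsum.trans (congrArg _ hT.symm)
  rw [sum_mul_gd_step_add_prune_eq, sum_mul_gd_step_add_prune_eq]
  simp only [← hS', hxt, hxU, ite_mul, one_mul, zero_mul, sum_ite_mem, univ_inter]
  linarith [sum_le_sum_of_card_eq_of_forall_le hU htop]

/-- With the gradient-descent update `Δ i = -η * g i`, the importance score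
`S i = -g i * Δ i - g i * θ i` equals `η * (g i)^2 - g i * θ i`, and the
indicator of a top-r subset by `S` minimizes the linearized objective change
over all binary vectors summing to `r`. -/
theorem pruning_gd_topr {d : ℕ} (g θ : Fin d → ℝ) (η : ℝ) (hη : 0 < η)
    (r : ℕ) (hr : r ≤ d)
    (S : Fin d → ℝ) (hS : ∀ i, S i = -(g i) * (-η * g i) - g i * θ i)
    (T : Finset (Fin d)) (hT : T.card = r)
    (htop : ∀ i ∈ T, ∀ j ∉ T, S j ≤ S i)
    (xt : Fin d → ℝ) (hxt : ∀ i, xt i = if i ∈ T then 1 else 0) :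
    (∀ i, S i = η * (g i) ^ 2 - g i * θ i) ∧
      ∀ x : Fin d → ℝ, (∀ i, x i = 0 ∨ x i = 1) → (∑ i, x i) = (r : ℝ) →
        ∑ i, g i * (xt i * (-η * g i) + (1 - xt i) * (-θ i)) ≤
          ∑ i, g i * (x i * (-η * g i) + (1 - x i) * (-θ i)) :=
  pruning_gd_topr_general g θ η r S hS T hT htop xt hxt
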